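/- arXiv:1310.3746 — 3 statements merged into one kernel-verified Lean document; each statement's English description precedes it below -/
import Mathlib

section
/- Let A be a finite subgroup of SU(3) all of whose elements are diagonal matrices, and suppose A is invariant under conjugation by E, i.e. E A E⁻¹ = A. Then there exist positive integers m and n with n dividing m, and an integer k with 0 ≤ k ≤ r−1 where r = m/n, such that, setting ε = exp(2πi/m), the matrices F = diag(ε, ε^k, ε^{−k−1}) and G = diag(1, ε^{−r}, ε^{r}) belong to A and together generate A; moreover A is isomorphic to ℤ_m × ℤ_n. -/
/-!
Read off the first two diagonal entries: `a ↦ (a₀₀, a₁₁)` is an injective homomorphism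
`A → ℂˣ × ℂˣ`, because `det a = 1` determines `a₂₂`. Conjugation by `E` shifts the diagonal
cyclically, so every value of `a₁₁` is also a value of `a₀₀`. The image of `a ↦ a₀₀` is a finite
subgroup of `ℂˣ`, hence the group of `m`-th roots of unity, and `a ↦ a₁₁` embeds its kernel
as the `n`-th roots of unity inside them, so `n ∣ m`. Take `F` with `F₀₀ = ε` and `G` in the kernel
with `G₁₁ = ε^{-r}`; multiplying `F` by a power of `G` brings `F₁₁` to `ε^k` with `0 ≤ k < r`.
Then `F, G` generate `A`, have orders `m, n`, and `|A| = mn` gives `A ≅ ℤ_m × ℤ_n`.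
-/

open Matrix Complex

noncomputable section

/-- The group `SU(3)`: 3×3 complex unitary matrices of determinant 1. -/
abbrev SU3 : Type := ↥(Matrix.specialUnitaryGroup (Fin 3) ℂ)

noncomputable instance : Group SU3 :=
  { (inferInstance : Monoid SU3) with
    inv := fun A => ⟨star A.val,
      ⟨Unitary.star_mem A.2.1, by
        have h2 : A.val.det = 1 := A.2.2
        show Matrix.detMonoidHom (star A.val) = 1
        show (star A.val).det = 1
        rw [Matrix.star_eq_conjTranspose, Matrix.det_conjTranspose, h2, star_one]⟩⟩
    inv_mul_cancel := fun A => Subtype.ext A.2.1.1 }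

/-- The matrix `E` with rows (0,1,0), (0,0,1), (1,0,0). -/
def EM : Matrix (Fin 3) (Fin 3) ℂ := !![0, 1, 0; 0, 0, 1; 1, 0, 0]

/-- The matrix `B` with rows (-1,0,0), (0,0,-1), (0,-1,0). -/
def BM : Matrix (Fin 3) (Fin 3) ℂ := !![-1, 0, 0; 0, 0, -1; 0, -1, 0]

/-- `ε = exp(2πi/m)`. -/
def eps (m : ℕ) : ℂ := Complex.exp (2 * Real.pi * Complex.I / m)

/-- The diagonal matrix `F = diag(ε, ε^k, ε^(-k-1))` with `ε = exp(2πi/m)`. -/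
def FM (m : ℕ) (k : ℤ) : Matrix (Fin 3) (Fin 3) ℂ :=
  Matrix.diagonal ![eps m, eps m ^ k, eps m ^ (-k - 1)]

/-- The diagonal matrix `G = diag(1, ε^(-r), ε^r)` with `ε = exp(2πi/m)`. -/
def GM (m r : ℕ) : Matrix (Fin 3) (Fin 3) ℂ :=
  Matrix.diagonal ![1, eps m ^ (-(r : ℤ)), eps m ^ (r : ℤ)]

open Subgroup Function

instance MonoidHom.finite_range {G H : Type*} [Group G] [Group H] [Finite G] (f : G →* H) :
    Finite f.range :=
  inferInstanceAs (Finite (Set.range f))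

theorem MonoidHom.range_eq_rootsOfUnity_natCard {G R : Type*} [Group G] [Finite G] [CommRing R]
    [IsDomain R] (f : G →* Rˣ) : f.range = rootsOfUnity (Nat.card f.range) R :=
  eq_of_le_of_card_ge
    (fun x hx => (mem_rootsOfUnity _ x).2 <|
      congrArg Subtype.val (pow_card_eq_one' (G := f.range) (x := ⟨x, hx⟩)))
    (_root_.card_rootsOfUnity R _)

theorem Subgroup.closure_pair_eq_top_of_range_le_of_ker_le {A B : Type*} [Group A] [Group B]
    {p : A →* B} {x y : A} (hrange : p.range ≤ zpowers (p x)) (hker : p.ker ≤ zpowers y) :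
    closure {x, y} = ⊤ := by
  refine eq_top_iff.2 fun a _ => ?_
  obtain ⟨i, hi⟩ := mem_zpowers_iff.1 (hrange ⟨a, rfl⟩)
  have hmem : (x ^ i)⁻¹ * a ∈ closure {x, y} :=
    zpowers_le.2 (subset_closure (by simp)) <| hker <| by simp [← hi]
  simpa using mul_mem (zpow_mem (subset_closure (by simp) : x ∈ closure {x, y}) i) hmem

theorem nonempty_mulEquiv_zmod_prod_of_closure_eq_top {G : Type*} [Group G] [Finite G] {x y : G}
    (hxy : Commute x y) (hgen : closure {x, y} = ⊤)
    (hcard : Nat.card G = orderOf x * orderOf y) :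
    Nonempty (G ≃* Multiplicative (ZMod (orderOf x)) × Multiplicative (ZMod (orderOf y))) := by
  let μ : zpowers x × zpowers y →* G :=
    (zpowers x).subtype.noncommCoprod (zpowers y).subtype fun ⟨_, i, hi⟩ ⟨_, j, hj⟩ => by
      simpa [← hi, ← hj] using hxy.zpow_zpow i j
  have hsurj : Surjective μ := by
    rw [← MonoidHom.range_eq_top, eq_top_iff, ← hgen, closure_le]
    simp only [Set.insert_subset_iff, Set.singleton_subset_iff]
    exact ⟨⟨(⟨x, mem_zpowers x⟩, 1), by simp [μ]⟩, ⟨(1, ⟨y, mem_zpowers y⟩), by simp [μ]⟩⟩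
  have hμ : Bijective μ :=
    (Nat.bijective_iff_surjective_and_card μ).2 ⟨hsurj, by simp [hcard, Nat.card_prod]⟩
  have hgen_zpowers (z : G) : ∀ w : zpowers z, w ∈ zpowers ⟨z, mem_zpowers z⟩ :=
    fun ⟨_, i, hi⟩ => ⟨i, Subtype.ext (by simpa using hi)⟩
  exact ⟨(MulEquiv.ofBijective μ hμ).symm.trans <| MulEquiv.prodCongr
    (zmodMulEquivOfGenerator (hgen_zpowers x) (Nat.card_zpowers x)).symm
    (zmodMulEquivOfGenerator (hgen_zpowers y) (Nat.card_zpowers y)).symm⟩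

section PairOfCharacters

variable {A : Type*} [Group A]

theorem orderOf_eq_lcm_of_injective_prod {M N : Type*} [Monoid M] [Monoid N]
    {p : A →* M} {q : A →* N} (hinj : Injective (p.prod q)) (a : A) :
    orderOf a = (orderOf (p a)).lcm (orderOf (q a)) := by
  rw [← orderOf_injective _ hinj a, Prod.orderOf]
  rfl

variable {B : Type*} [Group B] {p q : A →* B}

theorem injective_comp_ker_subtype_of_injective_prod (hinj : Injective (p.prod q)) :
    Injective (q.comp p.ker.subtype) := fun a b hab =>
  Subtype.ext <| hinj <|
    Prod.ext (by simp [(MonoidHom.mem_ker).1 a.2, (MonoidHom.mem_ker).1 b.2]) hab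

theorem natCard_ker_dvd_natCard_range (hinj : Injective (p.prod q)) (hle : q.range ≤ p.range) :
    Nat.card p.ker ∣ Nat.card p.range := by
  rw [Nat.card_congr
    (MonoidHom.ofInjective (injective_comp_ker_subtype_of_injective_prod hinj)).toEquiv]
  refine card_dvd_of_le (le_trans ?_ hle)
  rintro _ ⟨a, rfl⟩
  exact ⟨a, rfl⟩

end PairOfCharacters

theorem IsPrimitiveRoot.inv_pow_div {M : Type*} [CommGroup M] {ζ : M} {m d : ℕ}
    (hζ : IsPrimitiveRoot ζ m) (hm : 0 < m) (hd : d ∣ m) : IsPrimitiveRoot (ζ ^ (m / d))⁻¹ d :=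
  (hζ.pow hm (Nat.div_mul_cancel hd).symm).inv

section CharactersIntoUnits

variable {A : Type*} [Group A] [Finite A] {p q : A →* ℂˣ}

theorem exists_ker_le_zpowers (hinj : Injective (p.prod q)) (hle : q.range ≤ p.range)
    {ζ : ℂˣ} (hζ : IsPrimitiveRoot ζ (Nat.card p.range)) :
    ∃ G : A, p G = 1 ∧ q G = (ζ ^ (Nat.card p.range / Nat.card p.ker))⁻¹ ∧ p.ker ≤ zpowers G := by
  have hq' := injective_comp_ker_subtype_of_injective_prod hinj
  have : NeZero (Nat.card p.ker) := ⟨Nat.card_pos.ne'⟩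
  have hrange : (q.comp p.ker.subtype).range = rootsOfUnity (Nat.card p.ker) ℂ := by
    rw [(q.comp p.ker.subtype).range_eq_rootsOfUnity_natCard,
      ← Nat.card_congr (MonoidHom.ofInjective hq').toEquiv]
  have hη : IsPrimitiveRoot (ζ ^ (Nat.card p.range / Nat.card p.ker))⁻¹ (Nat.card p.ker) :=
    hζ.inv_pow_div Nat.card_pos (natCard_ker_dvd_natCard_range hinj hle)
  obtain ⟨g, hg⟩ : _ ∈ (q.comp p.ker.subtype).range := hrange ▸ hη.mem_rootsOfUnity
  refine ⟨g, g.2, hg, fun a ha => ?_⟩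
  obtain ⟨j, hj⟩ : q a ∈ zpowers (ζ ^ (Nat.card p.range / Nat.card p.ker))⁻¹ := by
    rw [hη.zpowers_eq, ← hrange]
    exact ⟨⟨a, ha⟩, rfl⟩
  exact ⟨j, congrArg Subtype.val (hq' (a₁ := g ^ j) (a₂ := ⟨a, ha⟩) <| by
    simpa [← hj] using congrArg (· ^ j) hg)⟩

theorem exists_map_eq_primitive_root (hle : q.range ≤ p.range)
    {ζ : ℂˣ} (hζ : IsPrimitiveRoot ζ (Nat.card p.range)) {r : ℕ} (hr : 0 < r)
    {G : A} (hpG : p G = 1) (hqG : q G = (ζ ^ r)⁻¹) :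
    ∃ F : A, ∃ k : ℤ, 0 ≤ k ∧ k < r ∧ p F = ζ ∧ q F = ζ ^ k := by
  have hrange : p.range = zpowers ζ :=
    have : NeZero (Nat.card p.range) := ⟨Nat.card_pos.ne'⟩
    p.range_eq_rootsOfUnity_natCard.trans hζ.zpowers_eq.symm
  obtain ⟨F₀, hF₀⟩ : ζ ∈ p.range := hrange ▸ mem_zpowers ζ
  obtain ⟨i, hi⟩ : q F₀ ∈ zpowers ζ := hrange ▸ hle ⟨F₀, rfl⟩
  refine ⟨F₀ * G ^ (i / r), i % r, Int.emod_nonneg _ (by omega), Int.emod_lt_of_pos _ (by omega),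
    by simp [hF₀, hpG], ?_⟩
  rw [map_mul, map_zpow, hqG, ← hi, Int.emod_def, ← zpow_natCast, ← _root_.zpow_neg,
    ← _root_.zpow_mul, ← _root_.zpow_add]
  ring_nf

theorem exists_generators_of_injective_prod (hinj : Injective (p.prod q))
    (hle : q.range ≤ p.range) {ζ : ℂˣ} (hζ : IsPrimitiveRoot ζ (Nat.card p.range)) :
    ∃ k : ℤ, 0 ≤ k ∧ k < (Nat.card p.range / Nat.card p.ker : ℕ) ∧ ∃ F G : A,
      p F = ζ ∧ q F = ζ ^ k ∧ p G = 1 ∧ q G = (ζ ^ (Nat.card p.range / Nat.card p.ker))⁻¹ ∧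
      closure {F, G} = ⊤ ∧
      Nonempty (A ≃* Multiplicative (ZMod (Nat.card p.range)) ×
        Multiplicative (ZMod (Nat.card p.ker))) := by
  have hdvd := natCard_ker_dvd_natCard_range hinj hle
  obtain ⟨G, hpG, hqG, hker⟩ := exists_ker_le_zpowers hinj hle hζ
  obtain ⟨F, k, hk0, hkr, hpF, hqF⟩ := exists_map_eq_primitive_root hle hζ
    (Nat.div_pos (Nat.le_of_dvd Nat.card_pos hdvd) Nat.card_pos) hpG hqG
  have hgen : closure {F, G} = ⊤ := by
    have : NeZero (Nat.card p.range) := ⟨Nat.card_pos.ne'⟩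
    refine closure_pair_eq_top_of_range_le_of_ker_le ?_ hker
    rw [hpF, p.range_eq_rootsOfUnity_natCard, hζ.zpowers_eq]
  have hF : orderOf F = Nat.card p.range := by
    rw [orderOf_eq_lcm_of_injective_prod hinj, hpF, hqF, ← hζ.eq_orderOf]
    exact Nat.lcm_eq_left (hζ.eq_orderOf ▸ orderOf_dvd_of_mem_zpowers (zpow_mem_zpowers ζ k))
  have hG : orderOf G = Nat.card p.ker := by
    rw [orderOf_eq_lcm_of_injective_prod hinj, hpG, hqG, orderOf_one, Nat.lcm_one_left,
      ← (hζ.inv_pow_div Nat.card_pos hdvd).eq_orderOf]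
  have hcard : Nat.card A = orderOf F * orderOf G := by
    rw [hF, hG, ← p.ker.card_mul_index, index_ker, mul_comm]
  have hcomm : Commute F G := hinj (by simp [mul_comm])
  refine ⟨k, hk0, hkr, F, G, hpF, hqF, hpG, hqG, hgen, ?_⟩
  rw [← hF, ← hG]
  exact nonempty_mulEquiv_zmod_prod_of_closure_eq_top hcomm hgen hcard

end CharactersIntoUnits

theorem Matrix.IsDiag.eq_diagonal_of_det_eq_one {K : Type*} [Field K]
    {M : Matrix (Fin 3) (Fin 3) K} (hM : M.IsDiag) (hdet : M.det = 1) :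
    M = diagonal ![M 0 0, M 1 1, (M 0 0 * M 1 1)⁻¹] := by
  rw [← hM.diagonal_diag, det_diagonal, Fin.prod_univ_three] at hdet
  conv_lhs => rw [← hM.diagonal_diag]
  congr 1
  ext i
  fin_cases i
  exacts [rfl, rfl, eq_inv_of_mul_eq_one_right hdet]

theorem EM_mul_mul_star_apply_zero_zero (M : Matrix (Fin 3) (Fin 3) ℂ) :
    (EM * M * star EM) 0 0 = M 1 1 := by
  simp [EM, mul_apply, Fin.sum_univ_three, star_apply, vecMul, dotProduct]

section DiagonalSubgroup

variable {A : Subgroup SU3} (hdiag : ∀ a ∈ A, (a : Matrix (Fin 3) (Fin 3) ℂ).IsDiag)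

def diagEntryHom (i : Fin 3) : A →* ℂˣ :=
  MonoidHom.toHomUnits
    { toFun := fun a => (a : Matrix (Fin 3) (Fin 3) ℂ) i i
      map_one' := by simp
      map_mul' := fun a b => by
        change ((a : Matrix (Fin 3) (Fin 3) ℂ) * b) i i = _
        rw [← (hdiag a a.2).diagonal_diag, diagonal_mul, diagonal_apply_eq] }

theorem coe_eq_diagonal_diagEntryHom (a : A) :
    (a : Matrix (Fin 3) (Fin 3) ℂ) =
      diagonal ![(diagEntryHom hdiag 0 a : ℂ), diagEntryHom hdiag 1 a,
        ((diagEntryHom hdiag 0 a : ℂ) * diagEntryHom hdiag 1 a)⁻¹] :=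
  (hdiag a a.2).eq_diagonal_of_det_eq_one (a : SU3).2.2

theorem injective_diagEntryHom_prod :
    Injective ((diagEntryHom hdiag 0).prod (diagEntryHom hdiag 1)) := fun a b hab => by
  obtain ⟨h0, h1⟩ := Prod.ext_iff.1 hab
  refine Subtype.ext <| Subtype.ext ?_
  rw [coe_eq_diagonal_diagEntryHom hdiag a, coe_eq_diagonal_diagEntryHom hdiag b]
  simp only [MonoidHom.prod_apply] at h0 h1
  rw [h0, h1]

theorem range_diagEntryHom_one_le {E : SU3} (hE : (E : Matrix (Fin 3) (Fin 3) ℂ) = EM)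
    (hconj : (fun a => E * a * E⁻¹) '' (A : Set SU3) = (A : Set SU3)) :
    (diagEntryHom hdiag 1).range ≤ (diagEntryHom hdiag 0).range := by
  rintro _ ⟨a, rfl⟩
  have hmem : E * a * E⁻¹ ∈ A := by
    rw [← SetLike.mem_coe, ← hconj]
    exact Set.mem_image_of_mem _ a.2
  refine ⟨⟨_, hmem⟩, Units.ext ?_⟩
  change ((E : Matrix (Fin 3) (Fin 3) ℂ) * a * star (E : Matrix (Fin 3) (Fin 3) ℂ)) 0 0 = _
  rw [hE, EM_mul_mul_star_apply_zero_zero]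
  rfl

end DiagonalSubgroup

theorem FM_eq_diagonal (m : ℕ) (k : ℤ) :
    FM m k = diagonal ![eps m, eps m ^ k, (eps m * eps m ^ k)⁻¹] := by
  rw [FM, show -k - 1 = -(k + 1) by ring, _root_.zpow_neg,
    zpow_add_one₀ (a := eps m) (Complex.exp_ne_zero _), mul_comm]

theorem GM_eq_diagonal (m r : ℕ) :
    GM m r = diagonal ![1, (eps m ^ r)⁻¹, (1 * (eps m ^ r)⁻¹)⁻¹] := by
  rw [GM, one_mul, inv_inv, _root_.zpow_neg, zpow_natCast]

theorem statement0 (A : Subgroup SU3) (hfin : Finite A)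
    (hdiag : ∀ a ∈ A, ((a : Matrix (Fin 3) (Fin 3) ℂ)).IsDiag)
    (E : SU3) (hE : (E : Matrix (Fin 3) (Fin 3) ℂ) = EM)
    (hconj : (fun a => E * a * E⁻¹) '' (A : Set SU3) = (A : Set SU3)) :
    ∃ m n : ℕ, 0 < m ∧ 0 < n ∧ n ∣ m ∧
      ∃ k : ℤ, 0 ≤ k ∧ k ≤ ((m / n : ℕ) : ℤ) - 1 ∧
        ∃ F G : SU3,
          (F : Matrix (Fin 3) (Fin 3) ℂ) = FM m k ∧
          (G : Matrix (Fin 3) (Fin 3) ℂ) = GM m (m / n) ∧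
          F ∈ A ∧ G ∈ A ∧ Subgroup.closure {F, G} = A ∧
          Nonempty (A ≃* Multiplicative (ZMod m) × Multiplicative (ZMod n)) := by
  have hinj := injective_diagEntryHom_prod hdiag
  have hle := range_diagEntryHom_one_le hdiag hE hconj
  have hm : 0 < Nat.card (diagEntryHom hdiag 0).range := Nat.card_pos
  have hε : IsPrimitiveRoot (eps _) _ := Complex.isPrimitiveRoot_exp _ hm.ne'
  obtain ⟨k, hk0, hkr, F, G, hpF, hqF, hpG, hqG, hgen, hiso⟩ :=
    exists_generators_of_injective_prod hinj hle (hε.isUnit_unit hm.ne')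
  refine ⟨_, _, hm, Nat.card_pos, natCard_ker_dvd_natCard_range hinj hle, k, hk0, by omega,
    F, G, ?_, ?_, F.2, G.2, ?_, hiso⟩
  · rw [coe_eq_diagonal_diagEntryHom hdiag, FM_eq_diagonal, hpF, hqF, Units.val_zpow_eq_zpow_val,
      IsUnit.unit_spec]
  · rw [coe_eq_diagonal_diagEntryHom hdiag, GM_eq_diagonal, hpG, hqG, Units.val_inv_eq_inv_val,
      Units.val_pow_eq_pow_val, IsUnit.unit_spec, Units.val_one]
  · have := congrArg (Subgroup.map A.subtype) hgen
    rwa [MonoidHom.map_closure, Set.image_pair, ← MonoidHom.range_eq_map, range_subtype] at this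

end
end

section
/- Let G be a finite subgroup of SU(3) containing the matrix E such that every element of G is of the form E^j·D for some j ∈ {0,1,2} and some diagonal matrix D (i.e. G is generated by E together with diagonal matrices). Then there exist positive integers m, n with n dividing m, and an integer k with 0 ≤ k ≤ r−1 where r = m/n, satisfying 1 + k + k² ≡ 0 (mod r), such that G is generated by the three matrices E, F = diag(ε, ε^k, ε^{−k−1}) and G₀ = diag(1, ε^{−r}, ε^{r}), where ε = exp(2πi/m). -/
open Matrix Complex

noncomputable section

/-!
The diagonal elements of `𝒢` form a finite abelian group, faithfully recorded by the pairs
`(a, b)` of their first two diagonal entries, and conjugation by `E` acts on these pairs by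
`(a, b) ↦ (b, (ab)⁻¹)`. The first entries form the cyclic group `μ_m = ⟨ε⟩`; the second entries
of the elements with first entry `1` form `μ_n`, and `μ_n ⊆ μ_m` because conjugation by `E` moves
second entries to the first place. Put `r = m / n`. Starting from an element with first entry `ε`,
multiplication by powers of `G₀ = diag(1, ε⁻ʳ, εʳ)` brings its second entry to `εᵏ` with
`0 ≤ k < r`; call the result `F`. Conjugating `F` by `E` and dividing by `Fᵏ` gives an element with
entries `(1, ε^-(1 + k + k²))`, whence `r ∣ 1 + k + k²`. Every diagonal element of `𝒢` is then
`Fᵗ G₀ˢ`, and every element of `𝒢` is a power of `E` times a diagonal one.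
-/

open Subgroup

theorem Matrix.IsDiag.mul {n α : Type*} [Fintype n] [NonUnitalNonAssocSemiring α]
    {A B : Matrix n n α} (ha : A.IsDiag) (hb : B.IsDiag) : (A * B).IsDiag := by
  classical
  rw [← ha.diagonal_diag, ← hb.diagonal_diag, diagonal_mul_diagonal]
  exact isDiag_diagonal _

theorem Subgroup.eq_rootsOfUnity_natCard {R : Type*} [CommRing R] [IsDomain R]
    (H : Subgroup Rˣ) [Finite H] : H = rootsOfUnity (Nat.card H) R :=
  eq_of_le_of_card_ge (fun x hx => (_root_.mem_rootsOfUnity _ _).2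
      (congrArg Subtype.val (pow_card_eq_one' (x := (⟨x, hx⟩ : H))))) (card_rootsOfUnity R _)

instance Subgroup.finite_map {G M : Type*} [Group G] [Group M] (A : Subgroup G) [Finite A]
    (φ : G →* M) : Finite (A.map φ) :=
  Finite.of_surjective _ (φ.subgroupMap_surjective A)

instance Subgroup.finite_subgroupOf {G : Type*} [Group G] (H K : Subgroup G) [Finite H] :
    Finite (H.subgroupOf K) :=
  Finite.of_injective (fun g => (⟨g, g.2⟩ : H)) fun _ _ h =>
    Subtype.ext (Subtype.ext (congrArg (fun x : H => (x : G)) h))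

theorem IsPrimitiveRoot.dvd_of_zpow_mem_zpowers {G : Type*} [CommGroup G] {ζ : G} {m : ℕ}
    (h : IsPrimitiveRoot ζ m) {r c : ℤ} (hr : r ∣ m) (hc : ζ ^ c ∈ zpowers (ζ ^ r)) : r ∣ c := by
  obtain ⟨s, hs⟩ := mem_zpowers_iff.1 hc
  have : (m : ℤ) ∣ c - r * s := by
    rw [← h.zpow_eq_one_iff_dvd, _root_.zpow_sub, _root_.zpow_mul, hs, mul_inv_cancel]
  simpa using (hr.trans this).add (dvd_mul_right r s)

theorem Subgroup.le_closure_pair_of_map_le_zpowers {G M : Type*} [Group G] [Group M]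
    {A : Subgroup G} (φ : G →* M) {x y : G} (hx : x ∈ A) (himage : A.map φ ≤ zpowers (φ x))
    (hker : A ⊓ φ.ker ≤ zpowers y) : A ≤ closure {x, y} := by
  intro a ha
  obtain ⟨t, ht⟩ := mem_zpowers_iff.1 (himage (mem_map_of_mem φ ha))
  have hfiber : a * x ^ (-t) ∈ zpowers y :=
    hker ⟨mul_mem ha (zpow_mem hx _), by simp [← ht]⟩
  rw [show a = a * x ^ (-t) * x ^ t by group]
  exact mul_mem (zpowers_le.2 (subset_closure (by simp)) hfiber)
    (zpow_mem (subset_closure (by simp)) t)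

section Prod

variable {G H : Type*} [Group G] [Group H] {A : Subgroup (G × H)}

theorem Subgroup.inf_ker_fst_le_zpowers {h : H} (hA : A.comap (MonoidHom.inr G H) ≤ zpowers h) :
    A ⊓ (MonoidHom.fst G H).ker ≤ zpowers (1, h) := by
  rintro x ⟨hxA, hx1⟩
  have hx : x = (1, x.2) := Prod.ext (MonoidHom.mem_ker.1 hx1) rfl
  obtain ⟨s, hs⟩ := mem_zpowers_iff.1 (hA (show (1, x.2) ∈ A from hx ▸ hxA))
  exact ⟨s, by rw [hx, ← hs]; ext <;> simp⟩

theorem Subgroup.mk_zpow_emod_mem {g : G} {h : H} {a r : ℤ} (hg : (g, h ^ a) ∈ A)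
    (hr : (1, h ^ (-r)) ∈ A) : (g, h ^ (a % r)) ∈ A := by
  convert mul_mem hg (zpow_mem hr (a / r)) using 1
  ext
  · simp
  · simp only [Prod.snd_mul, Prod.pow_snd, Int.emod_def]
    group

end Prod

/-- Conjugation by `E` sends `diag(a, b, (ab)⁻¹)` to `diag(b, (ab)⁻¹, a)`; this is the resulting
condition on the pairs `(a, b)` of leading diagonal entries of a group normalised by `E`. -/
def IsShiftInvariant {G : Type*} [CommGroup G] (A : Subgroup (G × G)) : Prop :=
  ∀ x ∈ A, (x.2, (x.1 * x.2)⁻¹) ∈ A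

namespace IsShiftInvariant

variable {G : Type*} [CommGroup G] {A : Subgroup (G × G)} (hA : IsShiftInvariant A)
include hA

theorem map_snd_le_map_fst : A.map (MonoidHom.snd G G) ≤ A.map (MonoidHom.fst G G) := by
  rintro _ ⟨x, hx, rfl⟩
  exact ⟨_, hA x hx, rfl⟩

theorem comap_inr_le_map_fst : A.comap (MonoidHom.inr G G) ≤ A.map (MonoidHom.fst G G) :=
  fun _ hh => hA.map_snd_le_map_fst ⟨_, hh, rfl⟩

theorem exists_mk_zpow_mem {g : G} (hg : A.map (MonoidHom.fst G G) = zpowers g) :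
    ∃ a : ℤ, (g, g ^ a) ∈ A := by
  obtain ⟨x, hx, hx1⟩ := hg.ge (mem_zpowers g)
  obtain ⟨a, ha⟩ := mem_zpowers_iff.1 (hg.le (hA.map_snd_le_map_fst ⟨x, hx, rfl⟩))
  exact ⟨a, by rwa [show (g, g ^ a) = x from Prod.ext hx1.symm ha]⟩

theorem one_mk_zpow_mem {g : G} {k : ℤ} (hg : (g, g ^ k) ∈ A) :
    (1, g ^ (-(1 + k + k ^ 2))) ∈ A := by
  convert mul_mem (hA _ hg) (zpow_mem hg (-k)) using 1
  ext
  · simp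
  · simp only [Prod.snd_mul, Prod.pow_snd]
    group

end IsShiftInvariant

theorem eps_ne_zero (m : ℕ) : eps m ≠ 0 := Complex.exp_ne_zero _

def epsUnit (m : ℕ) : ℂˣ := Units.mk0 (eps m) (eps_ne_zero m)

theorem val_epsUnit (m : ℕ) : (epsUnit m : ℂ) = eps m := rfl

theorem isPrimitiveRoot_epsUnit (m : ℕ) [NeZero m] : IsPrimitiveRoot (epsUnit m) m :=
  IsPrimitiveRoot.coe_units_iff.mp (Complex.isPrimitiveRoot_exp m (NeZero.ne m))

theorem IsShiftInvariant.exists_closure_eq {A : Subgroup (ℂˣ × ℂˣ)} [Finite A]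
    (hA : IsShiftInvariant A) :
    ∃ m n : ℕ, 0 < m ∧ 0 < n ∧ n ∣ m ∧
      ∃ k : ℤ, 0 ≤ k ∧ k ≤ ((m / n : ℕ) : ℤ) - 1 ∧ ((m / n : ℕ) : ℤ) ∣ 1 + k + k ^ 2 ∧
        Subgroup.closure {(epsUnit m, epsUnit m ^ k), (1, epsUnit m ^ (-((m / n : ℕ) : ℤ)))} =
          A := by
  set A₁ := A.map (MonoidHom.fst ℂˣ ℂˣ)
  set A₂ := A.comap (MonoidHom.inr ℂˣ ℂˣ)
  set m := Nat.card A₁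
  set n := Nat.card A₂
  set r := m / n
  have hA₂₁ : A₂ ≤ A₁ := hA.comap_inr_le_map_fst
  have : Finite A₂ := Finite.of_injective _ (inclusion_injective hA₂₁)
  have : NeZero m := ⟨Nat.card_pos.ne'⟩
  have : NeZero n := ⟨Nat.card_pos.ne'⟩
  set ε := epsUnit m
  have hnm : n ∣ m := card_dvd_of_le hA₂₁
  have hε : IsPrimitiveRoot ε m := isPrimitiveRoot_epsUnit m
  have hη : IsPrimitiveRoot (ε ^ (-(r : ℤ))) n := by
    rw [_root_.zpow_neg, zpow_natCast, IsPrimitiveRoot.inv_iff]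
    exact hε.pow (NeZero.pos m) (Nat.div_mul_cancel hnm).symm
  have hA₁ : A₁ = zpowers ε := by rw [hε.zpowers_eq, ← eq_rootsOfUnity_natCard]
  have hA₂ : A₂ = zpowers (ε ^ (-(r : ℤ))) := by rw [hη.zpowers_eq, ← eq_rootsOfUnity_natCard]
  have hκ : (1, ε ^ (-(r : ℤ))) ∈ A := (hA₂.ge (mem_zpowers _) : _)
  obtain ⟨a, ha⟩ := hA.exists_mk_zpow_mem hA₁
  set k := a % r
  have hF : (ε, ε ^ k) ∈ A := mk_zpow_emod_mem ha hκ
  have hdvd : (r : ℤ) ∣ 1 + k + k ^ 2 := by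
    have h := hA₂.le (hA.one_mk_zpow_mem hF)
    have hrm : -(r : ℤ) ∣ m :=
      neg_dvd.2 (Int.natCast_dvd_natCast.2 (Nat.div_dvd_of_dvd hnm))
    have := hε.dvd_of_zpow_mem_zpowers hrm h
    rwa [neg_dvd, dvd_neg] at this
  have hr : (0 : ℤ) < r := by
    exact_mod_cast Nat.div_pos (Nat.le_of_dvd (NeZero.pos m) hnm) (NeZero.pos n)
  refine ⟨m, n, NeZero.pos m, NeZero.pos n, hnm, k, Int.emod_nonneg a hr.ne',
    by linarith [Int.emod_lt_of_pos a hr], hdvd, le_antisymm ?_ ?_⟩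
  · rw [closure_le, Set.insert_subset_iff, Set.singleton_subset_iff]
    exact ⟨hF, hκ⟩
  · exact le_closure_pair_of_map_le_zpowers _ hF hA₁.le (inf_ker_fst_le_zpowers hA₂.le)

namespace SU3

local notation "M₃" => Matrix (Fin 3) (Fin 3) ℂ

theorem coe_inv (g : SU3) : ((g⁻¹ : SU3) : M₃) = star (g : M₃) := rfl

def diagSubgroup : Subgroup SU3 where
  carrier := {g | (g : M₃).IsDiag}
  mul_mem' ha hb := IsDiag.mul ha hb
  one_mem' := isDiag_one
  inv_mem' ha := IsDiag.conjTranspose ha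

theorem coe_eq_diagonal (g : diagSubgroup) :
    (g : M₃) = diagonal ![(g : M₃) 0 0, (g : M₃) 1 1, ((g : M₃) 0 0 * (g : M₃) 1 1)⁻¹] := by
  have hg : diagonal (g : M₃).diag = g := g.2.diagonal_diag
  have hdet : (g : M₃).det = 1 := (g : SU3).2.2
  rw [← hg, det_diagonal, Fin.prod_univ_three] at hdet
  have h₂ : (g : M₃) 2 2 = ((g : M₃) 0 0 * (g : M₃) 1 1)⁻¹ := eq_inv_of_mul_eq_one_right hdet
  conv_lhs => rw [← hg]
  congr 1
  ext i
  fin_cases i <;> simp [h₂]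

def diagEntry (i : Fin 3) : diagSubgroup →* ℂ where
  toFun g := (g : M₃) i i
  map_one' := one_apply_eq i
  map_mul' a b := by
    change ((a : M₃) * (b : M₃)) i i = _
    nth_rw 1 [← a.2.diagonal_diag]
    rw [diagonal_mul, diag_apply]

def diagUnits : diagSubgroup →* ℂˣ × ℂˣ :=
  (diagEntry 0).toHomUnits.prod (diagEntry 1).toHomUnits

theorem coe_eq_diagonal_of_diagUnits_eq {g : diagSubgroup} {a b : ℂˣ}
    (h : diagUnits g = (a, b)) :
    (g : M₃) = diagonal ![(a : ℂ), b, (a * b : ℂ)⁻¹] := by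
  obtain ⟨rfl, rfl⟩ := Prod.ext_iff.1 h
  exact coe_eq_diagonal g

theorem diagUnits_injective : Function.Injective diagUnits := fun a b h => by
  apply Subtype.ext; apply Subtype.ext
  rw [coe_eq_diagonal_of_diagUnits_eq h.symm, coe_eq_diagonal_of_diagUnits_eq rfl]

theorem EM_mul_diagonal_mul_star (d : Fin 3 → ℂ) :
    EM * diagonal d * star EM = diagonal ![d 1, d 2, d 0] := by
  ext i j
  fin_cases i <;> fin_cases j <;>
    simp [EM, mul_apply, Fin.sum_univ_three, star_eq_conjTranspose, vecMul, dotProduct]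

theorem isShiftInvariant_map_diagUnits {𝒢 : Subgroup SU3} {E : SU3} (hE : (E : M₃) = EM)
    (hEmem : E ∈ 𝒢) : IsShiftInvariant ((𝒢.subgroupOf diagSubgroup).map diagUnits) := by
  rintro _ ⟨g, hg, rfl⟩
  have hconj : ((E * g * E⁻¹ : SU3) : M₃) =
      diagonal ![(g : M₃) 1 1, ((g : M₃) 0 0 * (g : M₃) 1 1)⁻¹, (g : M₃) 0 0] := by
    rw [Submonoid.coe_mul, Submonoid.coe_mul, coe_inv, hE, coe_eq_diagonal g,
      EM_mul_diagonal_mul_star]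
    rfl
  have hdiag : E * g * E⁻¹ ∈ diagSubgroup := by
    show ((E * g * E⁻¹ : SU3) : M₃).IsDiag
    exact hconj ▸ isDiag_diagonal _
  refine ⟨⟨E * g * E⁻¹, hdiag⟩,
    mem_subgroupOf.2 (mul_mem (mul_mem hEmem (mem_subgroupOf.1 hg)) (inv_mem hEmem)), ?_⟩
  refine Prod.ext (Units.ext ?_) (Units.ext ?_)
  · exact congrFun₂ hconj 0 0
  · rw [Units.val_inv_eq_inv_val, Units.val_mul]
    exact congrFun₂ hconj 1 1

theorem coe_eq_FM {g : diagSubgroup} {m : ℕ} {k : ℤ}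
    (h : diagUnits g = (epsUnit m, epsUnit m ^ k)) : (g : M₃) = FM m k := by
  rw [coe_eq_diagonal_of_diagUnits_eq h, FM, Units.val_zpow_eq_zpow_val, val_epsUnit,
    ← zpow_one_add₀ (eps_ne_zero m), ← _root_.zpow_neg]
  ring_nf

theorem coe_eq_GM {g : diagSubgroup} {m r : ℕ}
    (h : diagUnits g = (1, epsUnit m ^ (-(r : ℤ)))) : (g : M₃) = GM m r := by
  rw [coe_eq_diagonal_of_diagUnits_eq h, GM, Units.val_zpow_eq_zpow_val, val_epsUnit,
    Units.val_one, one_mul, ← _root_.zpow_neg, neg_neg]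

theorem inf_diagSubgroup_eq_closure {𝒢 : Subgroup SU3} {F G₀ : diagSubgroup}
    (h : Subgroup.closure {diagUnits F, diagUnits G₀} =
      (𝒢.subgroupOf diagSubgroup).map diagUnits) :
    𝒢 ⊓ diagSubgroup = Subgroup.closure {(F : SU3), (G₀ : SU3)} := by
  rw [← Set.image_pair, ← MonoidHom.map_closure] at h
  rw [← subgroupOf_map_subtype, ← map_injective diagUnits_injective h, MonoidHom.map_closure,
    Set.image_pair]
  rfl

end SU3

theorem statement1 (𝒢 : Subgroup SU3) (hfin : Finite 𝒢)
    (E : SU3) (hE : (E : Matrix (Fin 3) (Fin 3) ℂ) = EM) (hEmem : E ∈ 𝒢)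
    (hform : ∀ g ∈ 𝒢, ∃ (j : ℕ) (D : SU3), j < 3 ∧
      ((D : Matrix (Fin 3) (Fin 3) ℂ)).IsDiag ∧ g = E ^ j * D) :
    ∃ m n : ℕ, 0 < m ∧ 0 < n ∧ n ∣ m ∧
      ∃ k : ℤ, 0 ≤ k ∧ k ≤ ((m / n : ℕ) : ℤ) - 1 ∧
        ((m / n : ℕ) : ℤ) ∣ 1 + k + k ^ 2 ∧
        ∃ F G₀ : SU3,
          (F : Matrix (Fin 3) (Fin 3) ℂ) = FM m k ∧
          (G₀ : Matrix (Fin 3) (Fin 3) ℂ) = GM m (m / n) ∧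
          Subgroup.closure {E, F, G₀} = 𝒢 := by
  obtain ⟨m, n, hm, hn, hnm, k, hk, hkr, hdvd, hA⟩ :=
    (SU3.isShiftInvariant_map_diagUnits hE hEmem).exists_closure_eq
  obtain ⟨F, hF𝒢, hF⟩ := hA.le (subset_closure (Set.mem_insert _ _))
  obtain ⟨G₀, hG₀𝒢, hG₀⟩ := hA.le (subset_closure (Set.mem_insert_of_mem _ rfl))
  rw [← hF, ← hG₀] at hA
  have hdiag := SU3.inf_diagSubgroup_eq_closure hA
  refine ⟨m, n, hm, hn, hnm, k, hk, hkr, hdvd, F, G₀, SU3.coe_eq_FM hF, SU3.coe_eq_GM hG₀, ?_⟩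
  refine le_antisymm ((closure_le _).2 ?_) fun g hg => ?_
  · rw [Set.insert_subset_iff, Set.insert_subset_iff, Set.singleton_subset_iff]
    exact ⟨hEmem, mem_subgroupOf.1 hF𝒢, mem_subgroupOf.1 hG₀𝒢⟩
  · obtain ⟨j, D, -, hD, rfl⟩ := hform g hg
    have hD𝒢 : D ∈ 𝒢 ⊓ SU3.diagSubgroup :=
      ⟨by simpa using mul_mem (inv_mem (pow_mem hEmem j)) hg, hD⟩
    rw [hdiag] at hD𝒢
    exact mul_mem (pow_mem (subset_closure (Set.mem_insert _ _)) j)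
      (closure_mono (Set.subset_insert _ _) hD𝒢)

end
end

section
/- Let m' and n be positive integers with n dividing m', neither m' nor n divisible by 3, and let k be an integer with 0 ≤ k ≤ 3m'/n − 1 and 1 + k + k² ≡ 0 (mod 3m'/n). Then k ≡ 1 (mod 3), and there exists an integer k' with 0 ≤ k' ≤ m'/n − 1, k' ≡ k (mod m'/n) and 1 + k' + k'² ≡ 0 (mod m'/n), such that C_{3m',n}^{(k)} is isomorphic to ℤ_3 × C_{m',n}^{(k')}. -/
open Matrix Complex

noncomputable section

/-!
Put `ε = exp(2πi/3m')`. Since `3 ∣ 1 + k + k²` forces `k ≡ 1 (mod 3)`, the power `W = F^{m'}` is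
the scalar matrix `ε^{m'}`, a central element of order 3. Writing `k = r t + k'` with `r = m'/n`,
the product `F³ Gᵗ` is the generator `F'` of `C_{m',n}^{(k')}` and `G` is its generator `G'`;
as `gcd(3, m') = 1`, the group `⟨E, F, G⟩` is generated by `W` and `H = ⟨E, F', G'⟩`.
Every element of `H` is a monomial matrix whose entries are `m'`-th roots of unity, whereas
`ε^{m'}` is not one because `3 ∤ m'`. So `W ∉ H`, the subgroups `⟨W⟩` and `H` meet trivially, and
`⟨E, F, G⟩ = ⟨W⟩ × H ≅ ℤ₃ × H`.
-/

open Subgroup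

section Monomial

variable {n R : Type*} [DecidableEq n] [CommSemiring R]

def IsMonomialOfRootsOfUnity (N : ℕ) (A : Matrix n n R) : Prop :=
  ∃ σ : Equiv.Perm n, ∃ d : n → R, (∀ j, d j ^ N = 1) ∧ ∀ i j, A i j = if i = σ j then d j else 0

namespace IsMonomialOfRootsOfUnity

variable {N : ℕ} {A B : Matrix n n R}

theorem diagonal {d : n → R} (hd : ∀ i, d i ^ N = 1) :
    IsMonomialOfRootsOfUnity N (Matrix.diagonal d) :=
  ⟨1, d, hd, fun i j => by by_cases h : i = j <;> simp [h]⟩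

theorem permMatrix (σ : Equiv.Perm n) : IsMonomialOfRootsOfUnity N (σ.permMatrix R) :=
  ⟨σ⁻¹, 1, fun _ => one_pow N, fun i j => by
    simp [PEquiv.toMatrix_apply, Equiv.eq_symm_apply]⟩

theorem mul [Fintype n] (hA : IsMonomialOfRootsOfUnity N A) (hB : IsMonomialOfRootsOfUnity N B) :
    IsMonomialOfRootsOfUnity N (A * B) := by
  obtain ⟨σ, d, hd, hA⟩ := hA
  obtain ⟨τ, e, he, hB⟩ := hB
  refine ⟨σ * τ, fun j => d (τ j) * e j, fun j => by rw [mul_pow, hd, he, one_mul], fun i j => ?_⟩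
  rw [Matrix.mul_apply, Finset.sum_eq_single (τ j)]
  · by_cases h : i = σ (τ j) <;> simp [hA, hB, h]
  · intro l _ hl
    rw [hB, if_neg hl, mul_zero]
  · exact fun h => (h (Finset.mem_univ _)).elim

theorem star [StarRing R] (hA : IsMonomialOfRootsOfUnity N A) :
    IsMonomialOfRootsOfUnity N (star A) := by
  obtain ⟨σ, d, hd, hA⟩ := hA
  refine ⟨σ⁻¹, fun j => Star.star (d (σ⁻¹ j)), fun j => by rw [← star_pow, hd, star_one],
    fun i j => ?_⟩
  rw [Matrix.star_apply, hA]
  by_cases h : j = σ i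
  · subst h
    simp
  · simp [h, Equiv.eq_symm_apply, Ne.symm h]

theorem pow_eq_one (hA : IsMonomialOfRootsOfUnity N A) {i j : n} (h : A i j ≠ 0) :
    A i j ^ N = 1 := by
  obtain ⟨σ, d, hd, hA⟩ := hA
  rw [hA] at h ⊢
  split_ifs at h ⊢
  · exact hd j
  · exact absurd rfl h

end IsMonomialOfRootsOfUnity

end Monomial

section DiagZPow

variable {n K : Type*} [DecidableEq n] [Field K]

theorem zpow_eq_zpow_of_modEq {ζ : K} {m : ℕ} (hζ : ζ ^ m = 1) {a b : ℤ} (h : a ≡ b [ZMOD m]) :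
    ζ ^ a = ζ ^ b := by
  rcases eq_or_ne m 0 with rfl | hm
  · rw [Int.ModEq, Nat.cast_zero, Int.emod_zero, Int.emod_zero] at h
    rw [h]
  have hζ0 : ζ ≠ 0 := by
    rintro rfl
    simp [zero_pow hm] at hζ
  obtain ⟨c, hc⟩ := h.dvd
  rw [show b = a + m * c by linarith, zpow_add₀ hζ0, _root_.zpow_mul, zpow_natCast, hζ,
    _root_.one_zpow, mul_one]

def diagZPow (ζ : K) (v : n → ℤ) : Matrix n n K := diagonal fun i => ζ ^ v i

theorem diagZPow_add [Fintype n] {ζ : K} (hζ : ζ ≠ 0) (v w : n → ℤ) :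
    diagZPow ζ (v + w) = diagZPow ζ v * diagZPow ζ w := by
  simp [diagZPow, zpow_add₀ hζ]

theorem diagZPow_nsmul [Fintype n] (ζ : K) (j : ℕ) (v : n → ℤ) :
    diagZPow ζ (j • v) = diagZPow ζ v ^ j := by
  rw [diagZPow, diagZPow, diagonal_pow]
  congr 1
  ext i
  rw [Pi.pow_apply, Pi.smul_apply, nsmul_eq_mul, mul_comm, _root_.zpow_mul, zpow_natCast]

theorem diagZPow_pow (ζ : K) (j : ℕ) (v : n → ℤ) :
    diagZPow (ζ ^ j) v = diagZPow ζ (j • v) := by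
  simp only [diagZPow, Pi.smul_apply, nsmul_eq_mul, ← zpow_natCast, ← _root_.zpow_mul]

theorem diagZPow_const [Fintype n] (ζ : K) (a : ℤ) :
    diagZPow ζ (fun _ : n => a) = scalar n (ζ ^ a) :=
  rfl

theorem diagZPow_congr {ζ : K} {m : ℕ} (hζ : ζ ^ m = 1) {v w : n → ℤ}
    (h : ∀ i, v i ≡ w i [ZMOD m]) : diagZPow ζ v = diagZPow ζ w := by
  simp only [diagZPow, zpow_eq_zpow_of_modEq hζ (h _)]

theorem isMonomialOfRootsOfUnity_diagZPow {ζ : K} {m : ℕ} (hζ : ζ ^ m = 1) (v : n → ℤ) :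
    IsMonomialOfRootsOfUnity m (diagZPow ζ v) :=
  .diagonal fun _ => by
    rw [← zpow_natCast, ← _root_.zpow_mul, mul_comm, _root_.zpow_mul, zpow_natCast, hζ,
      _root_.one_zpow]

end DiagZPow

section Group

variable {G : Type*} [Group G]

theorem mem_zpowers_pow_sup_zpowers_pow (x : G) {a b : ℕ} (hab : a.Coprime b) :
    x ∈ zpowers (x ^ a) ⊔ zpowers (x ^ b) := by
  have hx : x ^ (a.gcd b : ℤ) = (x ^ a) ^ a.gcdA b * (x ^ b) ^ a.gcdB b := by
    rw [Nat.gcd_eq_gcd_ab, _root_.zpow_add, _root_.zpow_mul, _root_.zpow_mul, zpow_natCast,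
      zpow_natCast]
  rw [hab.gcd_eq_one, Nat.cast_one, zpow_one] at hx
  have hmem : (x ^ a) ^ a.gcdA b * (x ^ b) ^ a.gcdB b ∈ zpowers (x ^ a) ⊔ zpowers (x ^ b) :=
    mul_mem (mem_sup_left (zpow_mem (mem_zpowers _) _)) (mem_sup_right (zpow_mem (mem_zpowers _) _))
  rwa [← hx] at hmem

theorem closure_eq_zpowers_pow_sup_closure (e f g : G) {a b : ℕ} (hab : a.Coprime b) (t : ℕ) :
    closure {e, f, g} = zpowers (f ^ b) ⊔ closure {e, f ^ a * g ^ t, g} := by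
  set H := closure {e, f ^ a * g ^ t, g}
  have heH : e ∈ H := subset_closure (by simp)
  have hgH : g ∈ H := subset_closure (by simp)
  have hfaH : f ^ a ∈ H := by
    simpa using mul_mem (subset_closure (by simp) : f ^ a * g ^ t ∈ H) (inv_mem (pow_mem hgH t))
  have he : e ∈ closure {e, f, g} := subset_closure (by simp)
  have hf : f ∈ closure {e, f, g} := subset_closure (by simp)
  have hg : g ∈ closure {e, f, g} := subset_closure (by simp)
  apply le_antisymm
  · rw [closure_le]
    rintro _ (rfl | rfl | rfl)
    · exact mem_sup_right heH
    · exact sup_le_sup_left (zpowers_le.2 hfaH) _ (mem_zpowers_pow_sup_zpowers_pow _ hab.symm)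
    · exact mem_sup_right hgH
  · rw [sup_le_iff, zpowers_le, closure_le]
    refine ⟨pow_mem hf b, ?_⟩
    rintro _ (rfl | rfl | rfl)
    · exact he
    · exact mul_mem (pow_mem hf a) (pow_mem hg t)
    · exact hg

theorem disjoint_zpowers_of_prime_orderOf {w : G} (hp : (orderOf w).Prime) {H : Subgroup G}
    (hw : w ∉ H) : Disjoint (zpowers w) H := by
  have : Finite (zpowers w) := Nat.finite_of_card_ne_zero ((Nat.card_zpowers w).trans_ne hp.ne_zero)
  rw [disjoint_iff, ← card_eq_one]
  have hdvd : Nat.card ↥(zpowers w ⊓ H) ∣ orderOf w :=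
    Nat.card_zpowers w ▸ card_dvd_of_le inf_le_left
  refine (hp.eq_one_or_self_of_dvd _ hdvd).resolve_right fun hcard => hw ?_
  have heq : zpowers w ⊓ H = zpowers w :=
    eq_of_le_of_card_ge inf_le_left (by rw [Nat.card_zpowers, hcard])
  exact (heq.symm ▸ mem_zpowers w : w ∈ zpowers w ⊓ H).2

theorem nonempty_sup_mulEquiv_prod {H K : Subgroup G} (hcomm : ∀ x ∈ H, ∀ y ∈ K, Commute x y)
    (hdisj : Disjoint H K) : Nonempty (↥(H ⊔ K) ≃* H × K) := by
  let φ := H.subtype.noncommCoprod K.subtype fun x y => hcomm x x.2 y y.2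
  have hinj : Function.Injective φ := (MonoidHom.noncommCoprod_injective _ _ _).2
    ⟨H.subtype_injective, K.subtype_injective, by simpa only [range_subtype] using hdisj⟩
  have hrange : φ.range = H ⊔ K :=
    (MonoidHom.noncommCoprod_range _ _ _).trans (by rw [range_subtype, range_subtype])
  exact ⟨((MonoidHom.ofInjective hinj).trans (MulEquiv.subgroupCongr hrange)).symm⟩

theorem nonempty_zpowers_sup_mulEquiv_zmod_prod {p : ℕ} [hp : Fact p.Prime] {w : G}
    (hw : w ∈ center G) (hwp : orderOf w = p) {H : Subgroup G} (hwH : w ∉ H) :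
    Nonempty (↥(zpowers w ⊔ H) ≃* Multiplicative (ZMod p) × H) := by
  have hcomm : ∀ x ∈ zpowers w, ∀ y ∈ H, Commute x y := fun x hx y _ =>
    (mem_center_iff.1 (zpowers_le.2 hw hx) y).symm
  obtain ⟨e⟩ := nonempty_sup_mulEquiv_prod hcomm
    (disjoint_zpowers_of_prime_orderOf (hwp ▸ hp.out) hwH)
  have hcard : Nat.card (zpowers w) = p := (Nat.card_zpowers w).trans hwp
  exact ⟨e.trans ((mulEquivOfPrimeCardEq hcard (by simp)).prodCongr (MulEquiv.refl H))⟩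

end Group

theorem Int.emod_three_eq_one_of_dvd_one_add_add_sq {k : ℤ} (h : 3 ∣ 1 + k + k ^ 2) :
    k % 3 = 1 := by
  have h' : ((1 + k + k ^ 2 : ℤ) : ZMod 3) = 0 := (ZMod.intCast_zmod_eq_zero_iff_dvd _ 3).2 h
  have hk : ((k : ℤ) : ZMod 3) = ((1 : ℤ) : ZMod 3) := by
    push_cast at h' ⊢
    generalize (k : ZMod 3) = x at h' ⊢
    revert x
    decide
  exact (ZMod.intCast_eq_intCast_iff' k 1 3).1 hk

theorem Int.dvd_one_add_add_sq_emod {r k : ℤ} (h : r ∣ 1 + k + k ^ 2) :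
    r ∣ 1 + k % r + (k % r) ^ 2 := by
  have hk : k % r ≡ k [ZMOD r] := Int.mod_modEq k r
  exact Int.modEq_zero_iff_dvd.1
    ((((Int.ModEq.refl 1).add hk).add (hk.pow 2)).trans (Int.modEq_zero_iff_dvd.2 h))

theorem eps_isPrimitiveRoot {m : ℕ} (hm : m ≠ 0) : IsPrimitiveRoot (eps m) m :=
  Complex.isPrimitiveRoot_exp m hm

theorem eps_pow_self (m : ℕ) : eps m ^ m = 1 := by
  rcases eq_or_ne m 0 with rfl | hm
  · exact pow_zero _
  · exact (eps_isPrimitiveRoot hm).pow_eq_one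

theorem eps_mul_pow {a : ℕ} (ha : a ≠ 0) (m : ℕ) : eps (a * m) ^ a = eps m := by
  rcases eq_or_ne m 0 with rfl | hm
  · simp [eps]
  rw [eps, eps, ← Complex.exp_nat_mul]
  congr 1
  push_cast
  field_simp

theorem FM_eq_diagZPow (m : ℕ) (k : ℤ) : FM m k = diagZPow (eps m) ![1, k, -k - 1] := by
  rw [FM, diagZPow]
  congr 1
  ext i
  fin_cases i <;> simp

theorem GM_eq_diagZPow (m r : ℕ) : GM m r = diagZPow (eps m) ![0, -(r : ℤ), r] := by
  rw [GM, diagZPow]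
  congr 1
  ext i
  fin_cases i <;> simp

theorem EM_eq_permMatrix : EM = (finRotate 3).permMatrix ℂ := by
  ext i j
  fin_cases i <;> fin_cases j <;> rfl

theorem GM_three_mul (m r : ℕ) : GM (3 * m) (3 * r) = GM m r := by
  rw [GM_eq_diagZPow, GM_eq_diagZPow, ← eps_mul_pow three_ne_zero m, diagZPow_pow]
  congr 1
  ext i
  fin_cases i <;> simp

theorem FM_pow_three_mul_GM_pow (m r t : ℕ) (k : ℤ) :
    FM (3 * m) k ^ 3 * GM (3 * m) (3 * r) ^ t = FM m (k - r * t) := by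
  rw [FM_eq_diagZPow, GM_eq_diagZPow, FM_eq_diagZPow, ← eps_mul_pow three_ne_zero m, diagZPow_pow,
    ← diagZPow_nsmul, ← diagZPow_nsmul, ← diagZPow_add (eps_ne_zero _)]
  congr 1
  ext i
  fin_cases i <;> simp <;> ring

theorem FM_three_mul_pow_eq_scalar {m : ℕ} {k : ℤ} (hk : k % 3 = 1) :
    FM (3 * m) k ^ m = scalar (Fin 3) (eps (3 * m) ^ m) := by
  rw [FM_eq_diagZPow, ← diagZPow_nsmul, ← zpow_natCast, ← diagZPow_const]
  have hv : ∀ i, ![1, k, -k - 1] i ≡ 1 [ZMOD 3] := by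
    intro i
    fin_cases i <;> simp [Int.ModEq] <;> omega
  refine diagZPow_congr (eps_pow_self _) fun i => ?_
  simpa [mul_comm] using (hv i).mul_left' (c := m)

theorem not_isMonomialOfRootsOfUnity_scalar_eps {m : ℕ} (hm : ¬ 3 ∣ m) :
    ¬ IsMonomialOfRootsOfUnity m (scalar (Fin 3) (eps (3 * m) ^ m)) := by
  intro h
  have hm0 : m ≠ 0 := by
    rintro rfl
    exact hm (dvd_zero 3)
  have h00 := h.pow_eq_one (i := 0) (j := 0) (by simp [eps_ne_zero])
  rw [scalar_apply, diagonal_apply_eq, ← pow_mul,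
    (eps_isPrimitiveRoot (by omega)).pow_eq_one_iff_dvd] at h00
  exact hm (Nat.dvd_of_mul_dvd_mul_right (Nat.pos_of_ne_zero hm0) h00)

def monomialSubgroup (N : ℕ) : Subgroup SU3 where
  carrier := {A | IsMonomialOfRootsOfUnity N (A : Matrix (Fin 3) (Fin 3) ℂ)}
  one_mem' := by
    simpa using IsMonomialOfRootsOfUnity.diagonal (n := Fin 3) (fun _ => one_pow (M := ℂ) N)
  mul_mem' hA hB := hA.mul hB
  inv_mem' hA := hA.star

theorem closure_le_monomialSubgroup {m r : ℕ} {k : ℤ} {E F G : SU3}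
    (hE : (E : Matrix (Fin 3) (Fin 3) ℂ) = EM) (hF : (F : Matrix (Fin 3) (Fin 3) ℂ) = FM m k)
    (hG : (G : Matrix (Fin 3) (Fin 3) ℂ) = GM m r) :
    Subgroup.closure {E, F, G} ≤ monomialSubgroup m := by
  rw [closure_le, Set.insert_subset_iff, Set.insert_subset_iff, Set.singleton_subset_iff]
  refine ⟨?_, ?_, ?_⟩
  · change IsMonomialOfRootsOfUnity m (E : Matrix (Fin 3) (Fin 3) ℂ)
    rw [hE, EM_eq_permMatrix]
    exact .permMatrix _
  · change IsMonomialOfRootsOfUnity m (F : Matrix (Fin 3) (Fin 3) ℂ)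
    rw [hF, FM_eq_diagZPow]
    exact isMonomialOfRootsOfUnity_diagZPow (eps_pow_self m) _
  · change IsMonomialOfRootsOfUnity m (G : Matrix (Fin 3) (Fin 3) ℂ)
    rw [hG, GM_eq_diagZPow]
    exact isMonomialOfRootsOfUnity_diagZPow (eps_pow_self m) _

theorem mem_center_of_coe_eq_scalar {A : SU3} {c : ℂ}
    (h : (A : Matrix (Fin 3) (Fin 3) ℂ) = scalar (Fin 3) c) : A ∈ center SU3 :=
  mem_center_iff.2 fun B => Subtype.ext <| by
    rw [Submonoid.coe_mul, Submonoid.coe_mul, h]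
    exact (scalar_commute c (Commute.all c) _).eq.symm

theorem orderOf_eq_three_of_coe_eq_scalar {A : SU3} {m : ℕ}
    (h : (A : Matrix (Fin 3) (Fin 3) ℂ) = scalar (Fin 3) (eps (3 * m) ^ m)) (hA : A ≠ 1) :
    orderOf A = 3 := by
  have : Fact (Nat.Prime 3) := ⟨Nat.prime_three⟩
  refine orderOf_eq_prime (Subtype.ext ?_) hA
  rw [SubmonoidClass.coe_pow, h, ← map_pow, ← pow_mul, mul_comm, eps_pow_self, map_one]
  rfl

theorem statement17_general (m' n : ℕ) (hnm : n ∣ m')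
    (h3m : ¬ 3 ∣ m')
    (k : ℤ) (hk0 : 0 ≤ k) (hkr : k ≤ ((3 * m' / n : ℕ) : ℤ) - 1)
    (hc : ((3 * m' / n : ℕ) : ℤ) ∣ 1 + k + k ^ 2)
    (E F G : SU3)
    (hE : (E : Matrix (Fin 3) (Fin 3) ℂ) = EM)
    (hF : (F : Matrix (Fin 3) (Fin 3) ℂ) = FM (3 * m') k)
    (hG : (G : Matrix (Fin 3) (Fin 3) ℂ) = GM (3 * m') (3 * m' / n)) :
    k % 3 = 1 ∧
    ∃ k' : ℤ, 0 ≤ k' ∧ k' ≤ ((m' / n : ℕ) : ℤ) - 1 ∧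
      k' % ((m' / n : ℕ) : ℤ) = k % ((m' / n : ℕ) : ℤ) ∧
      ((m' / n : ℕ) : ℤ) ∣ 1 + k' + k' ^ 2 ∧
      ∃ F' G' : SU3,
        (F' : Matrix (Fin 3) (Fin 3) ℂ) = FM m' k' ∧
        (G' : Matrix (Fin 3) (Fin 3) ℂ) = GM m' (m' / n) ∧
        Nonempty ((Subgroup.closure ({E, F, G} : Set SU3)) ≃*
          Multiplicative (ZMod 3) × (Subgroup.closure ({E, F', G'} : Set SU3))) := by
  set r := m' / n
  have h3r : 3 * m' / n = 3 * r := Nat.mul_div_assoc 3 hnm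
  rw [h3r] at hkr hc hG
  push_cast at hkr hc
  have hr : (0 : ℤ) < r := by omega
  have hk3 : k % 3 = 1 :=
    Int.emod_three_eq_one_of_dvd_one_add_add_sq (dvd_trans (Dvd.intro _ rfl) hc)
  obtain ⟨t, ht⟩ : ∃ t : ℕ, k % r = k - r * t :=
    ⟨(k / r).toNat, by rw [Int.toNat_of_nonneg (Int.ediv_nonneg hk0 hr.le), Int.emod_def]⟩
  have hF' : ((F ^ 3 * G ^ t : SU3) : Matrix (Fin 3) (Fin 3) ℂ) = FM m' (k % r) := by
    rw [Submonoid.coe_mul, SubmonoidClass.coe_pow, SubmonoidClass.coe_pow, hF, hG,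
      FM_pow_three_mul_GM_pow, ht]
  have hG' : (G : Matrix (Fin 3) (Fin 3) ℂ) = GM m' r := hG.trans (GM_three_mul m' r)
  have hW : ((F ^ m' : SU3) : Matrix (Fin 3) (Fin 3) ℂ) = scalar (Fin 3) (eps (3 * m') ^ m') := by
    rw [SubmonoidClass.coe_pow, hF, FM_three_mul_pow_eq_scalar hk3]
  have hWH : F ^ m' ∉ Subgroup.closure {E, F ^ 3 * G ^ t, G} := fun hmem =>
    not_isMonomialOfRootsOfUnity_scalar_eps h3m (hW ▸ closure_le_monomialSubgroup hE hF' hG' hmem)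
  refine ⟨hk3, k % r, Int.emod_nonneg _ hr.ne', by linarith [Int.emod_lt_of_pos k hr],
    Int.emod_emod _ _, Int.dvd_one_add_add_sq_emod (dvd_trans (Dvd.intro_left _ rfl) hc),
    F ^ 3 * G ^ t, G, hF', hG', ?_⟩
  have : Fact (Nat.Prime 3) := ⟨Nat.prime_three⟩
  rw [closure_eq_zpowers_pow_sup_closure E F G ((Nat.Prime.coprime_iff_not_dvd this.out).2 h3m) t]
  exact nonempty_zpowers_sup_mulEquiv_zmod_prod (mem_center_of_coe_eq_scalar hW)
    (orderOf_eq_three_of_coe_eq_scalar hW fun h => hWH (h ▸ one_mem _)) hWH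

theorem statement17 (m' n : ℕ) (hm' : 0 < m') (hn : 0 < n) (hnm : n ∣ m')
    (h3m : ¬ 3 ∣ m') (h3n : ¬ 3 ∣ n)
    (k : ℤ) (hk0 : 0 ≤ k) (hkr : k ≤ ((3 * m' / n : ℕ) : ℤ) - 1)
    (hc : ((3 * m' / n : ℕ) : ℤ) ∣ 1 + k + k ^ 2)
    (E F G : SU3)
    (hE : (E : Matrix (Fin 3) (Fin 3) ℂ) = EM)
    (hF : (F : Matrix (Fin 3) (Fin 3) ℂ) = FM (3 * m') k)
    (hG : (G : Matrix (Fin 3) (Fin 3) ℂ) = GM (3 * m') (3 * m' / n)) :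
    k % 3 = 1 ∧
    ∃ k' : ℤ, 0 ≤ k' ∧ k' ≤ ((m' / n : ℕ) : ℤ) - 1 ∧
      k' % ((m' / n : ℕ) : ℤ) = k % ((m' / n : ℕ) : ℤ) ∧
      ((m' / n : ℕ) : ℤ) ∣ 1 + k' + k' ^ 2 ∧
      ∃ F' G' : SU3,
        (F' : Matrix (Fin 3) (Fin 3) ℂ) = FM m' k' ∧
        (G' : Matrix (Fin 3) (Fin 3) ℂ) = GM m' (m' / n) ∧
        Nonempty ((Subgroup.closure ({E, F, G} : Set SU3)) ≃*
          Multiplicative (ZMod 3) × (Subgroup.closure ({E, F', G'} : Set SU3))) :=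
  statement17_general m' n hnm h3m k hk0 hkr hc E F G hE hF hG

end
end
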